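/- arXiv:0807.0910 — 4 statements merged into one kernel-verified Lean document; each statement's English description precedes it below -/
import Mathlib

section
/- Let m ≥ 2 and n ≥ 1. Let h : Fin m × Fin m → ℝ be a symmetric nondegenerate matrix (constant in p), and let g : (Fin m × Fin n → ℝ) → Fin n × Fin n → ℝ be a smooth matrix-valued function of the variables p = (p_i^a). Suppose H : (Fin m × Fin n → ℝ) → ℝ is smooth and satisfies (1/2) ∂²H/∂p_i^a ∂p_j^b = h(a,b) · g(p)(i,j) for all a,b,i,j. Then g is constant in p, i.e., ∂g(p)(i,j)/∂p_k^c = 0 for all i,j,k,c. -/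
open scoped BigOperators

/-- Partial derivative of `f` at `p` in the coordinate direction `v`,
for functions of the polymomenta `p = (p_i^a)`, indexed by `v = (a, i)`. -/
noncomputable def pder {m n : ℕ} (f : ((Fin m × Fin n) → ℝ) → ℝ)
    (v : Fin m × Fin n) (p : (Fin m × Fin n) → ℝ) : ℝ :=
  fderiv ℝ f p (Pi.single v 1)

section aux

variable {m n : ℕ}

lemma pder_smooth (f : ((Fin m × Fin n) → ℝ) → ℝ) (hf : ContDiff ℝ (⊤ : ℕ∞) f)
    (v : Fin m × Fin n) : ContDiff ℝ (⊤ : ℕ∞) (fun q => pder f v q) := by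
  have h1 : ContDiff ℝ (⊤ : ℕ∞) (fderiv ℝ f) := hf.fderiv_right ((by simp))
  exact (ContinuousLinearMap.apply ℝ ℝ (Pi.single v 1)).contDiff.comp h1

lemma pder_comm (f : ((Fin m × Fin n) → ℝ) → ℝ) (hf : ContDiff ℝ (⊤ : ℕ∞) f)
    (u v : Fin m × Fin n) (p : (Fin m × Fin n) → ℝ) :
    pder (fun q => pder f u q) v p = pder (fun q => pder f v q) u p := by
  have hdf : ContDiff ℝ (⊤ : ℕ∞) (fderiv ℝ f) := hf.fderiv_right (by simp)
  have hsym : IsSymmSndFDerivAt ℝ f p := by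
    apply hf.contDiffAt.isSymmSndFDerivAt
    rw [minSmoothness_of_isRCLikeNormedField]
    exact (WithTop.coe_le_coe.mpr (le_top : (2 : ℕ∞) ≤ ⊤))
  have key : ∀ w w' : (Fin m × Fin n) → ℝ,
      fderiv ℝ (fun q => fderiv ℝ f q w) p w' = fderiv ℝ (fderiv ℝ f) p w' w := by
    intro w w'
    rw [fderiv_clm_apply (hdf.differentiable (by simp)).differentiableAt
      (differentiableAt_const w)]
    simp
  unfold pder
  rw [key, key, hsym]

lemma pder_const_mul (f : ((Fin m × Fin n) → ℝ) → ℝ) (hf : ContDiff ℝ (⊤ : ℕ∞) f)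
    (c : ℝ) (v : Fin m × Fin n) (p : (Fin m × Fin n) → ℝ) :
    pder (fun q => c * f q) v p = c * pder f v p := by
  unfold pder
  rw [fderiv_const_mul (hf.differentiable (by simp)).differentiableAt]
  simp

end aux


/-- If `m ≥ 2`, `h` is a symmetric nondegenerate (constant in `p`) `m × m` matrix and the
vertical Hessian of a smooth `H` factors as `(1/2) ∂²H/∂p_i^a ∂p_j^b = h(a,b) g(p)(i,j)`
(Kronecker `h`-regularity), then `g` is constant in the polymomenta. -/
theorem kronecker_h_regular_forces_g_const
    {m n : ℕ} (hm : 2 ≤ m) (hn : 1 ≤ n)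
    (h : Fin m × Fin m → ℝ)
    (hsymm : ∀ a b : Fin m, h (a, b) = h (b, a))
    (hnd : IsUnit (Matrix.of (fun a b : Fin m => h (a, b))).det)
    (g : ((Fin m × Fin n) → ℝ) → Fin n × Fin n → ℝ)
    (hg : ∀ i j : Fin n, ContDiff ℝ (⊤ : ℕ∞) fun p => g p (i, j))
    (H : ((Fin m × Fin n) → ℝ) → ℝ) (hH : ContDiff ℝ (⊤ : ℕ∞) H)
    (hKron : ∀ (a b : Fin m) (i j : Fin n) (p : (Fin m × Fin n) → ℝ),
      (1 / 2 : ℝ) * pder (fun q => pder H (a, i) q) (b, j) p = h (a, b) * g p (i, j)) :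
    ∀ (i j : Fin n) (c : Fin m) (k : Fin n) (p : (Fin m × Fin n) → ℝ),
      pder (fun q => g q (i, j)) (c, k) p = 0 := by
  set A : Matrix (Fin m) (Fin m) ℝ := Matrix.of (fun a b : Fin m => h (a, b)) with hA
  have hinv : A⁻¹ * A = 1 := Matrix.nonsing_inv_mul A hnd
  -- star identity
  have star : ∀ (a b c : Fin m) (i j k : Fin n) (p : (Fin m × Fin n) → ℝ),
      h (a, b) * pder (fun q => g q (i, j)) (c, k) p
        = h (a, c) * pder (fun q => g q (i, k)) (b, j) p := by
    intro a b c i j k p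
    have hF : ContDiff ℝ (⊤ : ℕ∞) (fun q => pder H (a, i) q) := pder_smooth H hH (a, i)
    have e1 : (fun q => pder (fun r => pder H (a, i) r) (b, j) q)
        = fun q => 2 * (h (a, b) * g q (i, j)) := by
      funext q
      have := hKron a b i j q
      linarith
    have e2 : (fun q => pder (fun r => pder H (a, i) r) (c, k) q)
        = fun q => 2 * (h (a, c) * g q (i, k)) := by
      funext q
      have := hKron a c i k q
      linarith
    have d1 : pder (fun q => pder (fun r => pder H (a, i) r) (b, j) q) (c, k) p
        = 2 * h (a, b) * pder (fun q => g q (i, j)) (c, k) p := by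
      rw [e1]
      have := pder_const_mul (fun q => g q (i, j)) (hg i j) (2 * h (a, b)) (c, k) p
      simpa [mul_assoc] using this
    have d2 : pder (fun q => pder (fun r => pder H (a, i) r) (c, k) q) (b, j) p
        = 2 * h (a, c) * pder (fun q => g q (i, k)) (b, j) p := by
      rw [e2]
      have := pder_const_mul (fun q => g q (i, k)) (hg i k) (2 * h (a, c)) (b, j) p
      simpa [mul_assoc] using this
    have hc := pder_comm (fun q => pder H (a, i) q) hF (b, j) (c, k) p
    rw [d1, d2] at hc
    linarith
  -- contracted identity (**)
  have contr : ∀ (c : Fin m) (i j k : Fin n) (p : (Fin m × Fin n) → ℝ),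
      (m : ℝ) * pder (fun q => g q (i, j)) (c, k) p
        = pder (fun q => g q (i, k)) (c, j) p := by
    intro c i j k p
    have lhs : ∑ b : Fin m, ∑ a : Fin m,
        A⁻¹ b a * (h (a, b) * pder (fun q => g q (i, j)) (c, k) p)
        = (m : ℝ) * pder (fun q => g q (i, j)) (c, k) p := by
      have : ∑ b : Fin m, ∑ a : Fin m, A⁻¹ b a * h (a, b) = (m : ℝ) := by
        have : ∀ b : Fin m, ∑ a : Fin m, A⁻¹ b a * h (a, b) = (1 : Matrix (Fin m) (Fin m) ℝ) b b := by
          intro b; rw [← hinv]; simp [Matrix.mul_apply, hA]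
        simp [this, Matrix.one_apply]
      calc ∑ b : Fin m, ∑ a : Fin m,
          A⁻¹ b a * (h (a, b) * pder (fun q => g q (i, j)) (c, k) p)
          = (∑ b : Fin m, ∑ a : Fin m, A⁻¹ b a * h (a, b)) * pder (fun q => g q (i, j)) (c, k) p := by
            rw [Finset.sum_mul]
            congr 1; funext b
            rw [Finset.sum_mul]
            congr 1; funext a
            ring
        _ = (m : ℝ) * pder (fun q => g q (i, j)) (c, k) p := by rw [this]
    have rhs : ∑ b : Fin m, ∑ a : Fin m,
        A⁻¹ b a * (h (a, c) * pder (fun q => g q (i, k)) (b, j) p)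
        = pder (fun q => g q (i, k)) (c, j) p := by
      have step : ∀ b : Fin m, ∑ a : Fin m,
          A⁻¹ b a * (h (a, c) * pder (fun q => g q (i, k)) (b, j) p)
          = (if b = c then (1:ℝ) else 0) * pder (fun q => g q (i, k)) (b, j) p := by
        intro b
        have : ∑ a : Fin m, A⁻¹ b a * h (a, c) = (if b = c then (1:ℝ) else 0) := by
          have := congrArg (fun M => M b c) hinv
          simpa [Matrix.mul_apply, hA, Matrix.one_apply] using this
        calc ∑ a : Fin m, A⁻¹ b a * (h (a, c) * pder (fun q => g q (i, k)) (b, j) p)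
            = (∑ a : Fin m, A⁻¹ b a * h (a, c)) * pder (fun q => g q (i, k)) (b, j) p := by
              rw [Finset.sum_mul]; congr 1; funext a; ring
          _ = _ := by rw [this]
      rw [Finset.sum_congr rfl (fun b _ => step b)]
      simp
    have eq : ∑ b : Fin m, ∑ a : Fin m,
        A⁻¹ b a * (h (a, b) * pder (fun q => g q (i, j)) (c, k) p)
        = ∑ b : Fin m, ∑ a : Fin m,
        A⁻¹ b a * (h (a, c) * pder (fun q => g q (i, k)) (b, j) p) := by
      apply Finset.sum_congr rfl; intro b _
      apply Finset.sum_congr rfl; intro a _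
      rw [star a b c i j k p]
    rw [lhs, rhs] at eq
    exact eq
  intro i j c k p
  have e1 := contr c i j k p
  have e2 := contr c i k j p
  have hm' : (2 : ℝ) ≤ (m : ℝ) := by exact_mod_cast hm
  nlinarith [e1, e2, sq_nonneg ((m : ℝ) - 1)]
end

section
/- Let κ : Fin m × Fin m × Fin m → ℝ be the Christoffel symbols of a semi-Riemannian metric h_ab on ℝ^m (assumed given, symmetric in the lower indices). Define G_{(j)k}^{(a)}(p) = (1/2) Σ_{b,c} κ^a_{bc} p_j^b p_k^c on Mat_{n×m}(ℝ). Then under a change of temporal coordinates with Jacobian A and the induced transformation of Christoffel symbols κ̃^d_{ef} = A^d_a (A^{-1})^b_e (A^{-1})^c_f κ^a_{bc} − (A^{-1})^b_e (A^{-1})^c_f ∂A^d_b/∂t^c (with constant spatial Jacobian B = Id), the functions G transform by the temporal semispray rule 2G̃_{(k)r}^{(c)} = 2 A^c_b G_{(k)r}^{(b)} − (∂p̃_k^c/∂t^a) p_r^a. -/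
open scoped BigOperators

/-- The space of polymomenta `p = (p_i^a)`. -/
abbrev PolyMom (m n : ℕ) := Fin n → Fin m → ℝ

private lemma swap_efbc {m : ℕ} (g : Fin m → Fin m → Fin m → Fin m → ℝ) :
    (∑ e, ∑ f, ∑ b, ∑ c, g e f b c) = ∑ b, ∑ c, ∑ e, ∑ f, g e f b c :=
  calc (∑ e, ∑ f, ∑ b, ∑ c, g e f b c)
      = ∑ e, ∑ b, ∑ f, ∑ c, g e f b c :=
        Finset.sum_congr rfl fun _ _ => Finset.sum_comm
    _ = ∑ b, ∑ e, ∑ f, ∑ c, g e f b c := Finset.sum_comm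
    _ = ∑ b, ∑ e, ∑ c, ∑ f, g e f b c :=
        Finset.sum_congr rfl fun _ _ => Finset.sum_congr rfl fun _ _ => Finset.sum_comm
    _ = ∑ b, ∑ c, ∑ e, ∑ f, g e f b c :=
        Finset.sum_congr rfl fun _ _ => Finset.sum_comm

private lemma key_contract {m : ℕ} (A Ainv : Fin m → Fin m → ℝ)
    (hA' : ∀ a c, (∑ b, Ainv a b * A b c) = if a = c then (1 : ℝ) else 0)
    (b : Fin m) (v : Fin m → ℝ) :
    (∑ e, Ainv b e * ∑ b', A e b' * v b') = v b := by
  simp_rw [Finset.mul_sum, ← mul_assoc]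
  rw [Finset.sum_comm]
  simp_rw [← Finset.sum_mul, hA', ite_mul, one_mul, zero_mul]
  simp

private lemma expand_contract {m : ℕ} (Ainv : Fin m → Fin m → ℝ)
    (M : Fin m → Fin m → ℝ) (Pu Pv u v : Fin m → ℝ)
    (hu : ∀ b, (∑ e, Ainv b e * Pu e) = u b)
    (hv : ∀ c, (∑ f, Ainv c f * Pv f) = v c) :
    (∑ e, ∑ f, (∑ b, ∑ c, Ainv b e * Ainv c f * M b c) * Pu e * Pv f)
      = ∑ b, ∑ c, M b c * u b * v c := by
  have h1 : (∑ e, ∑ f, (∑ b, ∑ c, Ainv b e * Ainv c f * M b c) * Pu e * Pv f)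
      = ∑ e, ∑ f, ∑ b, ∑ c, (Ainv b e * Ainv c f * M b c) * Pu e * Pv f := by
    refine Finset.sum_congr rfl fun e _ => Finset.sum_congr rfl fun f _ => ?_
    rw [Finset.sum_mul, Finset.sum_mul]
    refine Finset.sum_congr rfl fun b _ => ?_
    rw [Finset.sum_mul, Finset.sum_mul]
  rw [h1, swap_efbc]
  refine Finset.sum_congr rfl fun b _ => Finset.sum_congr rfl fun c _ => ?_
  have t1 : ∀ e f, (Ainv b e * Ainv c f * M b c) * Pu e * Pv f
      = M b c * ((Ainv b e * Pu e) * (Ainv c f * Pv f)) := fun e f => by ring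
  simp_rw [t1, ← Finset.mul_sum, hv, ← Finset.sum_mul, hu]
  ring

/-- The canonical temporal semispray `G^{(a)}_{(j)k} = (1/2) κ^a_{bc} p_j^b p_k^c` of a
temporal metric `h_{ab}(t)` transforms by the temporal semispray rule
`2G̃_{(k)r}^{(c)} = 2 A^c_b G_{(k)r}^{(b)} − (∂p̃_k^c/∂t^a) p_r^a` under a change of
temporal coordinates with Jacobian `A` (with `A' d b c = ∂A^d_b/∂t^c` and the induced
non-tensorial transformation of the Christoffel symbols `κ`), spatial Jacobian `B = Id`. -/
theorem canonical_temporal_semispray_transformation {m n : ℕ}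
    (κ : Fin m → Fin m → Fin m → ℝ)
    (hκ : ∀ a b c, κ a b c = κ a c b)
    (A Ainv : Fin m → Fin m → ℝ)
    (hA : ∀ a c, (∑ b, A a b * Ainv b c) = if a = c then (1 : ℝ) else 0)
    (hA' : ∀ a c, (∑ b, Ainv a b * A b c) = if a = c then (1 : ℝ) else 0)
    -- `A' d b c` stands for `∂A^d_b/∂t^c`
    (A' : Fin m → Fin m → Fin m → ℝ)
    (κt : Fin m → Fin m → Fin m → ℝ)
    (hκt : ∀ d e f, κt d e f =
      (∑ a, ∑ b, ∑ c, A d a * Ainv b e * Ainv c f * κ a b c)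
        - ∑ b, ∑ c, Ainv b e * Ainv c f * A' d b c)
    (G Gt : Fin m → Fin n → Fin n → PolyMom m n → ℝ)
    (hG : ∀ a (j k : Fin n) p, G a j k p = (1 / 2 : ℝ) * ∑ b, ∑ c, κ a b c * p j b * p k c)
    (hGt : ∀ a (j k : Fin n) p, Gt a j k p = (1 / 2 : ℝ) * ∑ b, ∑ c, κt a b c * p j b * p k c) :
    ∀ (c : Fin m) (k r : Fin n) (p : PolyMom m n),
      2 * Gt c k r (fun i a => ∑ b, A a b * p i b) =
        2 * (∑ b, A c b * G b k r p)
          - ∑ a, (∑ b, A' c b a * p k b) * p r a := by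
  intro c k r p
  have hukey : ∀ b, (∑ e, Ainv b e * ∑ b', A e b' * p k b') = p k b :=
    fun b => key_contract A Ainv hA' b (p k)
  have hvkey : ∀ b, (∑ f, Ainv b f * ∑ b', A f b' * p r b') = p r b :=
    fun b => key_contract A Ainv hA' b (p r)
  have hL : (∑ e, ∑ f, κt c e f * (∑ b, A e b * p k b) * (∑ b, A f b * p r b))
      = (∑ b, ∑ c', (∑ a, A c a * κ a b c') * p k b * p r c')
        - ∑ b, ∑ c', A' c b c' * p k b * p r c' := by
    have split : ∀ e f, κt c e f * (∑ b, A e b * p k b) * (∑ b, A f b * p r b)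
        = (∑ b, ∑ c', Ainv b e * Ainv c' f * (∑ a, A c a * κ a b c'))
            * (∑ b, A e b * p k b) * (∑ b, A f b * p r b)
          - (∑ b, ∑ c', Ainv b e * Ainv c' f * A' c b c')
            * (∑ b, A e b * p k b) * (∑ b, A f b * p r b) := by
      intro e f
      rw [hκt]
      have h3 : (∑ a, ∑ b, ∑ c', A c a * Ainv b e * Ainv c' f * κ a b c')
          = ∑ b, ∑ c', Ainv b e * Ainv c' f * (∑ a, A c a * κ a b c') := by
        rw [Finset.sum_comm]
        refine Finset.sum_congr rfl fun b _ => ?_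
        rw [Finset.sum_comm]
        refine Finset.sum_congr rfl fun c' _ => ?_
        rw [Finset.mul_sum]
        exact Finset.sum_congr rfl fun a _ => by ring
      rw [h3]
      ring
    simp_rw [split, Finset.sum_sub_distrib]
    congr 1
    · exact expand_contract Ainv _ _ _ (p k) (p r) hukey hvkey
    · exact expand_contract Ainv _ _ _ (p k) (p r) hukey hvkey
  have hL' : Gt c k r (fun i a => ∑ b, A a b * p i b)
      = (1 / 2 : ℝ) * ((∑ b, ∑ c', (∑ a, A c a * κ a b c') * p k b * p r c')
          - ∑ b, ∑ c', A' c b c' * p k b * p r c') := by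
    rw [hGt]
    exact congrArg _ hL
  rw [hL']
  simp_rw [hG]
  have hR1 : (∑ b, ∑ c', (∑ a, A c a * κ a b c') * p k b * p r c')
      = ∑ a, A c a * ∑ b, ∑ c', κ a b c' * p k b * p r c' := by
    have t : ∀ b c', (∑ a, A c a * κ a b c') * p k b * p r c'
        = ∑ a, A c a * (κ a b c' * p k b * p r c') := by
      intro b c'
      rw [Finset.sum_mul, Finset.sum_mul]
      exact Finset.sum_congr rfl fun a _ => by ring
    simp_rw [t]
    calc (∑ b, ∑ c', ∑ a, A c a * (κ a b c' * p k b * p r c'))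
        = ∑ b, ∑ a, ∑ c', A c a * (κ a b c' * p k b * p r c') :=
          Finset.sum_congr rfl fun _ _ => Finset.sum_comm
      _ = ∑ a, ∑ b, ∑ c', A c a * (κ a b c' * p k b * p r c') := Finset.sum_comm
      _ = ∑ a, A c a * ∑ b, ∑ c', κ a b c' * p k b * p r c' := by
          simp_rw [← Finset.mul_sum]
  have hR2 : (∑ a, (∑ b, A' c b a * p k b) * p r a)
      = ∑ b, ∑ c', A' c b c' * p k b * p r c' := by
    simp_rw [Finset.sum_mul]
    exact Finset.sum_comm
  have hhalf : (∑ b, A c b * ((1 / 2 : ℝ) * ∑ b', ∑ c', κ b b' c' * p k b' * p r c'))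
      = (1 / 2 : ℝ) * ∑ b, A c b * ∑ b', ∑ c', κ b b' c' * p k b' * p r c' := by
    rw [Finset.mul_sum]
    exact Finset.sum_congr rfl fun b _ => by ring
  rw [hhalf, hR2, hR1]
  ring
end

section
/- Let γ : Fin n × Fin n × Fin n → ℝ be Christoffel symbols of a metric on ℝ^n, transforming under a spatial change of coordinates with Jacobian B by γ̃^l_{rs} = (B)^l_i (B^{-1})^j_r (B^{-1})^k_s γ^i_{jk} + (B)^l_i ∂(B^{-1})^i_r/∂x̃^s (suitably interpreted). Define G_{(j)k}^{(b)}(p) = −(1/2) Σ_i γ^i_{jk} p_i^b. Then G transforms by the spatial semispray rule 2G̃_{(s)k}^{(d)} = 2 Σ A^d_b (B^{-1})^i_k (B^{-1})^j_s G_{(j)i}^{(b)} − Σ (B^{-1})^i_k ∂p̃_s^d/∂x^i. -/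
open scoped BigOperators

section Aux

variable {M : Type*} [AddCommMonoid M] {α₁ α₂ α₃ α₄ : Type*}
  [Fintype α₁] [Fintype α₂] [Fintype α₃] [Fintype α₄]

lemma rot4 (f : α₁ → α₂ → α₃ → α₄ → M) :
    (∑ a, ∑ b, ∑ c, ∑ d, f a b c d) = ∑ b, ∑ c, ∑ d, ∑ a, f a b c d := by
  rw [Finset.sum_comm]
  refine Finset.sum_congr rfl fun b _ => ?_
  rw [Finset.sum_comm]
  exact Finset.sum_congr rfl fun c _ => Finset.sum_comm

lemma rev4 (f : α₁ → α₂ → α₃ → α₄ → M) :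
    (∑ a, ∑ b, ∑ c, ∑ d, f a b c d) = ∑ d, ∑ c, ∑ b, ∑ a, f a b c d := by
  calc (∑ a, ∑ b, ∑ c, ∑ d, f a b c d)
      = ∑ a, ∑ b, ∑ d, ∑ c, f a b c d :=
        Finset.sum_congr rfl fun a _ => Finset.sum_congr rfl fun b _ => Finset.sum_comm
    _ = ∑ a, ∑ d, ∑ b, ∑ c, f a b c d :=
        Finset.sum_congr rfl fun a _ => Finset.sum_comm
    _ = ∑ d, ∑ a, ∑ b, ∑ c, f a b c d := Finset.sum_comm
    _ = ∑ d, ∑ a, ∑ c, ∑ b, f a b c d :=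
        Finset.sum_congr rfl fun d _ => Finset.sum_congr rfl fun a _ => Finset.sum_comm
    _ = ∑ d, ∑ c, ∑ a, ∑ b, f a b c d :=
        Finset.sum_congr rfl fun d _ => Finset.sum_comm
    _ = ∑ d, ∑ c, ∑ b, ∑ a, f a b c d :=
        Finset.sum_congr rfl fun d _ => Finset.sum_congr rfl fun c _ => Finset.sum_comm

end Aux

/-- The canonical spatial semispray `G^{(b)}_{(j)k} = −(1/2) γ^i_{jk} p_i^b` of a spatial
metric transforms by the spatial semispray rule
`2G̃_{(s)k}^{(d)} = 2 Σ A^d_b (B⁻¹)^i_k (B⁻¹)^j_s G_{(j)i}^{(b)} − Σ (B⁻¹)^i_k ∂p̃_s^d/∂x^i`,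
where `γ` transforms by the non-tensorial Christoffel rule with spatial Jacobian `B`,
`C i r s = ∂(B⁻¹)^i_r/∂x̃^s`, and `∂p̃_s^d/∂x^i = Σ (∂(B⁻¹)^j_s/∂x^i) A^d_b p_j^b` with
`∂(B⁻¹)^j_s/∂x^i = Σ_l C j s l B^l_i` by the chain rule. -/
theorem canonical_spatial_semispray_transformation {m n : ℕ}
    (γ : Fin n → Fin n → Fin n → ℝ)
    (hγ : ∀ i j k, γ i j k = γ i k j)
    (A Ainv : Fin m → Fin m → ℝ)
    (hA : ∀ a c, (∑ b, A a b * Ainv b c) = if a = c then (1 : ℝ) else 0)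
    (hA' : ∀ a c, (∑ b, Ainv a b * A b c) = if a = c then (1 : ℝ) else 0)
    (B Binv : Fin n → Fin n → ℝ)
    (hB : ∀ i k, (∑ j, B i j * Binv j k) = if i = k then (1 : ℝ) else 0)
    (hB' : ∀ i k, (∑ j, Binv i j * B j k) = if i = k then (1 : ℝ) else 0)
    -- `C i r s` stands for `∂(B⁻¹)^i_r/∂x̃^s`
    (C : Fin n → Fin n → Fin n → ℝ)
    (γt : Fin n → Fin n → Fin n → ℝ)
    (hγt : ∀ l r s, γt l r s =
      (∑ i, ∑ j, ∑ k, B l i * Binv j r * Binv k s * γ i j k) + ∑ i, B l i * C i r s)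
    (G Gt : Fin m → Fin n → Fin n → PolyMom m n → ℝ)
    (hG : ∀ b (j k : Fin n) p, G b j k p = -(1 / 2 : ℝ) * ∑ i, γ i j k * p i b)
    (hGt : ∀ d (s k : Fin n) p, Gt d s k p = -(1 / 2 : ℝ) * ∑ l, γt l s k * p l d) :
    ∀ (d : Fin m) (s k : Fin n) (p : PolyMom m n),
      2 * Gt d s k (fun i a => ∑ j, ∑ b, Binv j i * A a b * p j b) =
        2 * (∑ b, ∑ i, ∑ j, A d b * Binv i k * Binv j s * G b j i p)
          - ∑ i, Binv i k *
              (∑ j, ∑ b, (∑ l, C j s l * B l i) * A d b * p j b) := by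
  intro d s k p
  have hΔ1 : ∀ i j : Fin n, (∑ l, B l i * Binv j l) = if j = i then (1 : ℝ) else 0 := by
    intro i j
    rw [← hB' j i]
    exact Finset.sum_congr rfl fun l _ => mul_comm _ _
  -- contraction of B with the transformed polymomenta
  have hBX : ∀ i : Fin n,
      (∑ l, B l i * ∑ j, ∑ b, Binv j l * A d b * p j b) = ∑ b, A d b * p i b := by
    intro i
    calc ∑ l, B l i * ∑ j, ∑ b, Binv j l * A d b * p j b
        = ∑ l, ∑ j, ∑ b, (B l i * Binv j l) * (A d b * p j b) := by
          refine Finset.sum_congr rfl fun l _ => ?_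
          rw [Finset.mul_sum]
          refine Finset.sum_congr rfl fun j _ => ?_
          rw [Finset.mul_sum]
          exact Finset.sum_congr rfl fun b _ => by ring
      _ = ∑ j, ∑ l, ∑ b, (B l i * Binv j l) * (A d b * p j b) := Finset.sum_comm
      _ = ∑ j, ∑ b, ∑ l, (B l i * Binv j l) * (A d b * p j b) :=
          Finset.sum_congr rfl fun j _ => Finset.sum_comm
      _ = ∑ j, ∑ b, (∑ l, B l i * Binv j l) * (A d b * p j b) := by
          refine Finset.sum_congr rfl fun j _ => Finset.sum_congr rfl fun b _ => ?_
          rw [Finset.sum_mul]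
      _ = ∑ j, ∑ b, (if j = i then (1:ℝ) else 0) * (A d b * p j b) := by
          refine Finset.sum_congr rfl fun j _ => Finset.sum_congr rfl fun b _ => ?_
          rw [hΔ1]
      _ = ∑ b, ∑ j, (if j = i then (1:ℝ) else 0) * (A d b * p j b) := Finset.sum_comm
      _ = ∑ b, A d b * p i b := by
          refine Finset.sum_congr rfl fun b _ => ?_
          simp
  have hL : 2 * Gt d s k (fun i a => ∑ j, ∑ b, Binv j i * A a b * p j b)
      = -(∑ l, γt l s k * ∑ j, ∑ b, Binv j l * A d b * p j b) := by
    simp only [hGt]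
    ring
  have hsplit : (∑ l, γt l s k * ∑ j, ∑ b, Binv j l * A d b * p j b)
      = (∑ i, ∑ j, ∑ k', ∑ b, Binv j s * Binv k' k * γ i j k' * (A d b * p i b))
        + ∑ i, C i s k * ∑ b, A d b * p i b := by
    have partT : (∑ l, (∑ i, ∑ j, ∑ k', B l i * Binv j s * Binv k' k * γ i j k') *
          (∑ j, ∑ b, Binv j l * A d b * p j b))
        = ∑ i, ∑ j, ∑ k', ∑ b, Binv j s * Binv k' k * γ i j k' * (A d b * p i b) := by
      calc (∑ l, (∑ i, ∑ j, ∑ k', B l i * Binv j s * Binv k' k * γ i j k') *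
              (∑ j, ∑ b, Binv j l * A d b * p j b))
          = ∑ l, ∑ i, ∑ j, ∑ k', (B l i * Binv j s * Binv k' k * γ i j k') *
              (∑ j, ∑ b, Binv j l * A d b * p j b) := by
            refine Finset.sum_congr rfl fun l _ => ?_
            rw [Finset.sum_mul]
            refine Finset.sum_congr rfl fun i _ => ?_
            rw [Finset.sum_mul]
            refine Finset.sum_congr rfl fun j _ => ?_
            rw [Finset.sum_mul]
        _ = ∑ i, ∑ j, ∑ k', ∑ l, (B l i * Binv j s * Binv k' k * γ i j k') *
              (∑ j, ∑ b, Binv j l * A d b * p j b) := rot4 _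
        _ = ∑ i, ∑ j, ∑ k', Binv j s * Binv k' k * γ i j k' *
              (∑ l, B l i * ∑ j, ∑ b, Binv j l * A d b * p j b) := by
            refine Finset.sum_congr rfl fun i _ => Finset.sum_congr rfl fun j _ =>
              Finset.sum_congr rfl fun k' _ => ?_
            conv_rhs => rw [Finset.mul_sum]
            exact Finset.sum_congr rfl fun l _ => by ring
        _ = ∑ i, ∑ j, ∑ k', ∑ b, Binv j s * Binv k' k * γ i j k' * (A d b * p i b) := by
            refine Finset.sum_congr rfl fun i _ => Finset.sum_congr rfl fun j _ =>
              Finset.sum_congr rfl fun k' _ => ?_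
            rw [hBX i, Finset.mul_sum]
    have partU : (∑ l, (∑ i, B l i * C i s k) * (∑ j, ∑ b, Binv j l * A d b * p j b))
        = ∑ i, C i s k * ∑ b, A d b * p i b := by
      calc (∑ l, (∑ i, B l i * C i s k) * (∑ j, ∑ b, Binv j l * A d b * p j b))
          = ∑ l, ∑ i, (B l i * C i s k) * (∑ j, ∑ b, Binv j l * A d b * p j b) := by
            refine Finset.sum_congr rfl fun l _ => ?_
            rw [Finset.sum_mul]
        _ = ∑ i, ∑ l, (B l i * C i s k) * (∑ j, ∑ b, Binv j l * A d b * p j b) :=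
            Finset.sum_comm
        _ = ∑ i, C i s k * ∑ l, B l i * (∑ j, ∑ b, Binv j l * A d b * p j b) := by
            refine Finset.sum_congr rfl fun i _ => ?_
            conv_rhs => rw [Finset.mul_sum]
            exact Finset.sum_congr rfl fun l _ => by ring
        _ = ∑ i, C i s k * ∑ b, A d b * p i b := by
            refine Finset.sum_congr rfl fun i _ => ?_
            rw [hBX i]
    calc (∑ l, γt l s k * ∑ j, ∑ b, Binv j l * A d b * p j b)
        = ∑ l, ((∑ i, ∑ j, ∑ k', B l i * Binv j s * Binv k' k * γ i j k') *
              (∑ j, ∑ b, Binv j l * A d b * p j b)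
            + (∑ i, B l i * C i s k) * (∑ j, ∑ b, Binv j l * A d b * p j b)) := by
          refine Finset.sum_congr rfl fun l _ => ?_
          rw [hγt, add_mul]
      _ = (∑ l, (∑ i, ∑ j, ∑ k', B l i * Binv j s * Binv k' k * γ i j k') *
              (∑ j, ∑ b, Binv j l * A d b * p j b))
          + ∑ l, (∑ i, B l i * C i s k) * (∑ j, ∑ b, Binv j l * A d b * p j b) :=
          Finset.sum_add_distrib
      _ = _ := by rw [partT, partU]
  have hE1 : 2 * (∑ b, ∑ i, ∑ j, A d b * Binv i k * Binv j s * G b j i p)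
      = -(∑ i, ∑ j, ∑ k', ∑ b, Binv j s * Binv k' k * γ i j k' * (A d b * p i b)) := by
    have h1 : (∑ b, ∑ i, ∑ j, A d b * Binv i k * Binv j s * G b j i p)
        = ∑ b, ∑ i, ∑ j, ∑ i', -(1/2 : ℝ) *
            (Binv j s * Binv i k * γ i' j i * (A d b * p i' b)) := by
      refine Finset.sum_congr rfl fun b _ => Finset.sum_congr rfl fun i _ =>
        Finset.sum_congr rfl fun j _ => ?_
      rw [hG, Finset.mul_sum, Finset.mul_sum]
      exact Finset.sum_congr rfl fun i' _ => by ring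
    rw [h1, rev4]
    rw [Finset.mul_sum, ← Finset.sum_neg_distrib]
    refine Finset.sum_congr rfl fun i' _ => ?_
    rw [Finset.mul_sum, ← Finset.sum_neg_distrib]
    refine Finset.sum_congr rfl fun j _ => ?_
    rw [Finset.mul_sum, ← Finset.sum_neg_distrib]
    refine Finset.sum_congr rfl fun i _ => ?_
    rw [Finset.mul_sum, ← Finset.sum_neg_distrib]
    exact Finset.sum_congr rfl fun b _ => by ring
  have hE2 : (∑ i, Binv i k * (∑ j, ∑ b, (∑ l, C j s l * B l i) * A d b * p j b))
      = ∑ i, C i s k * ∑ b, A d b * p i b := by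
    calc (∑ i, Binv i k * (∑ j, ∑ b, (∑ l, C j s l * B l i) * A d b * p j b))
        = ∑ i, ∑ j, ∑ b, ∑ l, C j s l * (A d b * p j b) * (B l i * Binv i k) := by
          refine Finset.sum_congr rfl fun i _ => ?_
          rw [Finset.mul_sum]
          refine Finset.sum_congr rfl fun j _ => ?_
          rw [Finset.mul_sum]
          refine Finset.sum_congr rfl fun b _ => ?_
          rw [Finset.sum_mul, Finset.sum_mul, Finset.mul_sum]
          exact Finset.sum_congr rfl fun l _ => by ring
      _ = ∑ l, ∑ b, ∑ j, ∑ i, C j s l * (A d b * p j b) * (B l i * Binv i k) := rev4 _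
      _ = ∑ l, ∑ b, ∑ j, C j s l * (A d b * p j b) * (if l = k then (1:ℝ) else 0) := by
          refine Finset.sum_congr rfl fun l _ => Finset.sum_congr rfl fun b _ =>
            Finset.sum_congr rfl fun j _ => ?_
          rw [← Finset.mul_sum, hB l k]
      _ = ∑ b, ∑ j, C j s k * (A d b * p j b) := by
          simp
      _ = ∑ i, C i s k * ∑ b, A d b * p i b := by
          rw [Finset.sum_comm]
          refine Finset.sum_congr rfl fun j _ => ?_
          conv_rhs => rw [Finset.mul_sum]
  rw [hL, hsplit, hE1, hE2]
  ring
end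

section
/- Let H(p) = Σ h(a,b) g(i,j) p_i^a p_j^b + Σ U(i,a) p_i^a + F where now h depends smoothly on t ∈ ℝ^m, g and U depend smoothly on (t,x) ∈ ℝ^m × ℝ^n, and F on (t,x). Let Γ^k_{ij} = (g^{kl}/2)(∂g_{li}/∂x^j + ∂g_{lj}/∂x^i − ∂g_{ij}/∂x^l) be the generalized spatial Christoffel symbols of g. Let U^{(k)}_{(b)} denote U(i,a) with index raised by g and lowered by h as appropriate, so that ∂H/∂p_k^b = 2h_{bc}g^{kl}p_l^c + U^{(k)}_{(b)}. Then the formula N₂_{(i)j}^{(a)} = (h^{ab}/4)[ (∂g_{ij}/∂x^k)(∂H/∂p_k^b) − (∂g_{ij}/∂p_k^b)(∂H/∂x^k) + g_{ik}(∂²H/∂x^j∂p_k^b) + g_{jk}(∂²H/∂x^i∂p_k^b) ] evaluates to N₂_{(i)j}^{(a)} = −Γ^k_{ij} p_k^a + T_{(i)j}^{(a)}, where T_{(i)j}^{(a)} = (h^{ab}/4)[ (∂g_{ij}/∂x^k)U^{(k)}_{(b)} + g_{ik} ∂U^{(k)}_{(b)}/∂x^j + g_{jk} ∂U^{(k)}_{(b)}/∂x^i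 ]. -/
open scoped BigOperators

/-- The total space with coordinates `(t, x, p)`. -/
abbrev Tot (m n : ℕ) := (Fin m → ℝ) × (Fin n → ℝ) × (Fin n → Fin m → ℝ)

/-- The base with coordinates `(t, x)`. -/
abbrev Base (m n : ℕ) := (Fin m → ℝ) × (Fin n → ℝ)

/-- Partial derivative `∂/∂x^k` of a function of `(t, x)`. -/
noncomputable def dxB {m n : ℕ} (f : Base m n → ℝ) (k : Fin n) (z : Base m n) : ℝ :=
  fderiv ℝ f z (0, Pi.single k 1)

/-- Partial derivative `∂/∂x^k` of a function of `(t, x, p)`. -/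
noncomputable def dxT {m n : ℕ} (f : Tot m n → ℝ) (k : Fin n) (w : Tot m n) : ℝ :=
  fderiv ℝ f w (0, Pi.single k 1, 0)

/-- Partial derivative `∂/∂p_k^b` of a function of `(t, x, p)`. -/
noncomputable def dpT {m n : ℕ} (f : Tot m n → ℝ) (k : Fin n) (b : Fin m) (w : Tot m n) : ℝ :=
  fderiv ℝ f w (0, 0, Pi.single k (Pi.single b 1))

section helpers

lemma fderiv_eq_deriv_line {E : Type*} [NormedAddCommGroup E] [NormedSpace ℝ E]
    {f : E → ℝ} {w : E} (hf : DifferentiableAt ℝ f w) (v : E) :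
    fderiv ℝ f w v = deriv (fun s : ℝ => f (w + s • v)) 0 := by
  have hline : HasDerivAt (fun s : ℝ => w + s • v) v 0 := by
    simpa using ((hasDerivAt_id (0:ℝ)).smul_const v).const_add w
  have hf' : HasFDerivAt f (fderiv ℝ f w) (w + (0:ℝ) • v) := by
    simpa using hf.hasFDerivAt
  exact (hf'.comp_hasDerivAt (0:ℝ) hline).deriv.symm

variable {m n : ℕ}

lemma dpT_eq {f : Tot m n → ℝ} {t : Fin m → ℝ} {x : Fin n → ℝ} {p : Fin n → Fin m → ℝ}
    (hf : DifferentiableAt ℝ f (t, x, p)) (k : Fin n) (b : Fin m) :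
    dpT f k b (t, x, p)
      = deriv (fun s : ℝ => f (t, x, p + s • (Pi.single k (Pi.single b 1) : Fin n → Fin m → ℝ))) 0 := by
  rw [dpT, fderiv_eq_deriv_line hf]
  congr 1
  funext s
  congr 1
  simp [Prod.ext_iff]

lemma dxT_eq {f : Tot m n → ℝ} {t : Fin m → ℝ} {x : Fin n → ℝ} {p : Fin n → Fin m → ℝ}
    (hf : DifferentiableAt ℝ f (t, x, p)) (k : Fin n) :
    dxT f k (t, x, p)
      = deriv (fun s : ℝ => f (t, x + s • (Pi.single k 1 : Fin n → ℝ), p)) 0 := by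
  rw [dxT, fderiv_eq_deriv_line hf]
  congr 1
  funext s
  congr 1
  simp [Prod.ext_iff]

lemma dxB_const (c : ℝ) (k : Fin n) (z : Base m n) : dxB (fun _ => c) k z = 0 := by
  simp [dxB]

lemma dxB_mul {f g : Base m n → ℝ} {z : Base m n} (hf : DifferentiableAt ℝ f z)
    (hg : DifferentiableAt ℝ g z) (k : Fin n) :
    dxB (fun z => f z * g z) k z = f z * dxB g k z + g z * dxB f k z := by
  simp [dxB, fderiv_fun_mul hf hg]

lemma dxB_sum {ι : Type*} (s : Finset ι) {f : ι → Base m n → ℝ} {z : Base m n}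
    (hf : ∀ i ∈ s, DifferentiableAt ℝ (f i) z) (k : Fin n) :
    dxB (fun z => ∑ i ∈ s, f i z) k z = ∑ i ∈ s, dxB (f i) k z := by
  simp [dxB, fderiv_fun_sum hf]

lemma sum_if_const {ι : Type*} (c : Prop) [Decidable c] (s : Finset ι) (f : ι → ℝ) :
    (∑ x ∈ s, if c then f x else 0) = if c then ∑ x ∈ s, f x else 0 := by
  split <;> simp

lemma hasDerivAt_quad (A x1 c1 x2 c2 : ℝ) :
    HasDerivAt (fun s : ℝ => A * (x1 + s * c1) * (x2 + s * c2)) (A * (c1 * x2 + x1 * c2)) 0 := by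
  have h1 : HasDerivAt (fun s : ℝ => x1 + s * c1) c1 0 := by
    simpa using ((hasDerivAt_id (0:ℝ)).mul_const c1).const_add x1
  have h2 : HasDerivAt (fun s : ℝ => x2 + s * c2) c2 0 := by
    simpa using ((hasDerivAt_id (0:ℝ)).mul_const c2).const_add x2
  have h3 : HasDerivAt (fun s : ℝ => A * ((x1 + s * c1) * (x2 + s * c2)))
      (A * (c1 * (x2 + 0 * c2) + (x1 + 0 * c1) * c2)) 0 := (h1.mul h2).const_mul A
  convert h3 using 1
  · funext s; ring
  · ring

lemma hasDerivAt_lin (A x1 c1 : ℝ) :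
    HasDerivAt (fun s : ℝ => A * (x1 + s * c1)) (A * c1) 0 := by
  simpa [mul_add] using (((hasDerivAt_id (0:ℝ)).mul_const c1).const_add x1).const_mul A

end helpers

set_option maxHeartbeats 1000000 in
/-- Formula (ExprCNLC): for a Hamiltonian of non-autonomous electrodynamics type
`H = h_{ab} g^{ij} p_i^a p_j^b + U^{(i)}_{(a)} p_i^a + F`, the spatial components
`N₂_{(i)j}^{(a)} = (h^{ab}/4)[(∂g_{ij}/∂x^k)(∂H/∂p_k^b) − (∂g_{ij}/∂p_k^b)(∂H/∂x^k)
+ g_{ik} ∂²H/∂x^j∂p_k^b + g_{jk} ∂²H/∂x^i∂p_k^b]` of the canonical nonlinear connection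
decompose as `−Γ^k_{ij} p_k^a + T_{(i)j}^{(a)}` with `T` independent of `p`. -/
theorem canonical_nonlinear_connection_decomposition {m n : ℕ}
    (h hinv : (Fin m → ℝ) → Fin m → Fin m → ℝ)
    (hsm : ∀ a b, ContDiff ℝ (⊤ : ℕ∞) fun t => h t a b)
    (hinvsm : ∀ a b, ContDiff ℝ (⊤ : ℕ∞) fun t => hinv t a b)
    (hsymm : ∀ t a b, h t a b = h t b a)
    (hh : ∀ t a c, (∑ b, h t a b * hinv t b c) = if a = c then (1 : ℝ) else 0)
    (hh' : ∀ t a c, (∑ b, hinv t a b * h t b c) = if a = c then (1 : ℝ) else 0)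
    (g ginv : Base m n → Fin n → Fin n → ℝ)
    (gsm : ∀ i j, ContDiff ℝ (⊤ : ℕ∞) fun z => g z i j)
    (ginvsm : ∀ i j, ContDiff ℝ (⊤ : ℕ∞) fun z => ginv z i j)
    (gsymm : ∀ z i j, g z i j = g z j i)
    (hg : ∀ z i k, (∑ j, g z i j * ginv z j k) = if i = k then (1 : ℝ) else 0)
    (hg' : ∀ z i k, (∑ j, ginv z i j * g z j k) = if i = k then (1 : ℝ) else 0)
    (U : Base m n → Fin n → Fin m → ℝ)
    (Usm : ∀ k b, ContDiff ℝ (⊤ : ℕ∞) fun z => U z k b)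
    (F : Base m n → ℝ) (Fsm : ContDiff ℝ (⊤ : ℕ∞) F)
    (H : Tot m n → ℝ)
    (hH : ∀ (t : Fin m → ℝ) (x : Fin n → ℝ) (p : Fin n → Fin m → ℝ),
      H (t, x, p) = (∑ a, ∑ b, ∑ i, ∑ j, h t a b * ginv (t, x) i j * p i a * p j b)
        + (∑ i, ∑ a, U (t, x) i a * p i a) + F (t, x)) :
    ∀ (t : Fin m → ℝ) (x : Fin n → ℝ) (p : Fin n → Fin m → ℝ) (a : Fin m) (i j : Fin n),
      (∑ b, (hinv t a b / 4) *
        ((∑ k, dxB (fun z => g z i j) k (t, x) * dpT H k b (t, x, p))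
          - (∑ k, dpT (fun w => g (w.1, w.2.1) i j) k b (t, x, p) * dxT H k (t, x, p))
          + (∑ k, g (t, x) i k * dxT (fun w => dpT H k b w) j (t, x, p))
          + (∑ k, g (t, x) j k * dxT (fun w => dpT H k b w) i (t, x, p)))) =
      -(∑ k, (∑ l, (ginv (t, x) k l / 2) *
            (dxB (fun z => g z l i) j (t, x) + dxB (fun z => g z l j) i (t, x)
              - dxB (fun z => g z i j) l (t, x))) * p k a)
        + ∑ b, (hinv t a b / 4) *
            ((∑ k, dxB (fun z => g z i j) k (t, x) * U (t, x) k b)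
              + (∑ k, g (t, x) i k * dxB (fun z => U z k b) j (t, x))
              + (∑ k, g (t, x) j k * dxB (fun z => U z k b) i (t, x))) := by
  intro t x p a i j
  have hd : ∀ a b, Differentiable ℝ fun t => h t a b := fun a b => (hsm a b).differentiable (by simp)
  have gd : ∀ i j, Differentiable ℝ fun z => g z i j := fun i j => (gsm i j).differentiable (by simp)
  have gid : ∀ i j, Differentiable ℝ fun z => ginv z i j :=
    fun i j => (ginvsm i j).differentiable (by simp)
  have Ud : ∀ k b, Differentiable ℝ fun z => U z k b := fun k b => (Usm k b).differentiable (by simp)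
  have Fd : Differentiable ℝ F := Fsm.differentiable (by simp)
  -- symmetry of ginv
  have ginvsymm : ∀ (z : Base m n) (k l : Fin n), ginv z k l = ginv z l k := by
    intro z k l
    have hB1 : (∑ j', ∑ i', ginv z k j' * g z j' i' * ginv z l i') = ginv z k l := by
      have step : ∀ j' : Fin n, (∑ i', ginv z k j' * g z j' i' * ginv z l i')
          = ginv z k j' * (if l = j' then (1:ℝ) else 0) := by
        intro j'
        rw [← hg' z l j', Finset.mul_sum]
        refine Finset.sum_congr rfl fun i' _ => ?_
        rw [gsymm z j' i']; ring
      rw [Finset.sum_congr rfl fun j' _ => step j']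
      simp [mul_ite]
    have hB2 : (∑ j', ∑ i', ginv z k j' * g z j' i' * ginv z l i') = ginv z l k := by
      rw [Finset.sum_comm]
      have step : ∀ i' : Fin n, (∑ j', ginv z k j' * g z j' i' * ginv z l i')
          = ginv z l i' * (if k = i' then (1:ℝ) else 0) := by
        intro i'
        rw [← hg' z k i', Finset.mul_sum]
        refine Finset.sum_congr rfl fun j' _ => ?_
        ring
      rw [Finset.sum_congr rfl fun i' _ => step i']
      simp [mul_ite]
    rw [← hB1, hB2]
  -- H as an explicit function
  have hHfun : H = fun w : Tot m n =>
      (∑ a', ∑ b', ∑ i', ∑ j', h w.1 a' b' * ginv (w.1, w.2.1) i' j' * w.2.2 i' a' * w.2.2 j' b')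
        + (∑ i', ∑ a', U (w.1, w.2.1) i' a' * w.2.2 i' a') + F (w.1, w.2.1) := by
    funext w
    exact hH w.1 w.2.1 w.2.2
  have Hdiff : Differentiable ℝ H := by
    rw [hHfun]; fun_prop
  -- value of dpT H
  have hdpT : ∀ (k : Fin n) (b : Fin m) (w : Tot m n),
      dpT H k b w = (∑ c, ∑ l, 2 * h w.1 b c * ginv (w.1, w.2.1) k l * w.2.2 l c)
        + U (w.1, w.2.1) k b := by
    intro k b w
    obtain ⟨t', x', p'⟩ := w
    rw [dpT_eq (Hdiff _) k b]
    set e : Fin n → Fin m → ℝ := Pi.single k (Pi.single b 1) with he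
    have hφ : (fun s : ℝ => H (t', x', p' + s • e)) = fun s : ℝ =>
        ((∑ a', ∑ b', ∑ i', ∑ j', h t' a' b' * ginv (t', x') i' j'
            * (p' i' a' + s * e i' a') * (p' j' b' + s * e j' b'))
          + (∑ i', ∑ a', U (t', x') i' a' * (p' i' a' + s * e i' a'))) + F (t', x') := by
      funext s
      rw [hHfun]
      simp [add_assoc]
    rw [hφ]
    have hD : HasDerivAt (fun s : ℝ =>
        ((∑ a', ∑ b', ∑ i', ∑ j', h t' a' b' * ginv (t', x') i' j'
            * (p' i' a' + s * e i' a') * (p' j' b' + s * e j' b'))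
          + (∑ i', ∑ a', U (t', x') i' a' * (p' i' a' + s * e i' a'))) + F (t', x'))
        ((∑ a', ∑ b', ∑ i', ∑ j', h t' a' b' * ginv (t', x') i' j'
            * (e i' a' * p' j' b' + p' i' a' * e j' b'))
          + (∑ i', ∑ a', U (t', x') i' a' * e i' a')) 0 := by
      apply HasDerivAt.add_const
      apply HasDerivAt.add
      · exact HasDerivAt.fun_sum fun a' _ => HasDerivAt.fun_sum fun b' _ => HasDerivAt.fun_sum fun i' _ =>
          HasDerivAt.fun_sum fun j' _ => hasDerivAt_quad _ _ _ _ _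
      · exact HasDerivAt.fun_sum fun i' _ => HasDerivAt.fun_sum fun a' _ => hasDerivAt_lin _ _ _
    rw [hD.deriv]
    have he1 : ∀ (i' : Fin n) (a' : Fin m),
        e i' a' = if i' = k then (if a' = b then (1:ℝ) else 0) else 0 := by
      intro i' a'
      rw [he]
      by_cases h1 : i' = k <;> by_cases h2 : a' = b <;> simp [Pi.single_apply, h1, h2]
    simp only [he1, mul_ite, ite_mul, mul_zero, zero_mul, mul_one, one_mul, mul_add, add_mul]
    congr 1
    · simp only [Finset.sum_add_distrib, sum_if_const, Finset.sum_const_zero,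
        Finset.sum_ite_eq', Finset.mem_univ, if_true]
      rw [← Finset.sum_add_distrib]
      refine Finset.sum_congr rfl fun c _ => ?_
      rw [← Finset.sum_add_distrib]
      refine Finset.sum_congr rfl fun l _ => ?_
      rw [hsymm t' c b, ginvsymm (t', x') l k]
      ring
    · simp only [sum_if_const, Finset.sum_const_zero, Finset.sum_ite_eq', Finset.mem_univ,
        if_true]
  -- dpT of g-composite vanishes
  have hdpg : ∀ (k : Fin n) (b : Fin m),
      dpT (fun w : Tot m n => g (w.1, w.2.1) i j) k b (t, x, p) = 0 := by
    intro k b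
    rw [dpT_eq (by fun_prop) k b]
    simp
  -- second derivatives dxT (dpT H)
  have hdxdp : ∀ (k : Fin n) (b : Fin m) (d : Fin n),
      dxT (fun w => dpT H k b w) d (t, x, p)
        = (∑ c, ∑ l, 2 * h t b c * dxB (fun z => ginv z k l) d (t, x) * p l c)
          + dxB (fun z => U z k b) d (t, x) := by
    intro k b d
    have hfun : (fun w => dpT H k b w) = fun w : Tot m n =>
        (∑ c, ∑ l, 2 * h w.1 b c * ginv (w.1, w.2.1) k l * w.2.2 l c) + U (w.1, w.2.1) k b := by
      funext w; exact hdpT k b w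
    rw [hfun, dxT_eq (by fun_prop) d]
    have hcurve : HasDerivAt (fun s : ℝ => ((t, x + s • (Pi.single d 1 : Fin n → ℝ)) : Base m n))
        (((0 : Fin m → ℝ), (Pi.single d 1 : Fin n → ℝ)) : (Fin m → ℝ) × (Fin n → ℝ)) 0 :=
      (hasDerivAt_const _ _).prodMk
        (by simpa using ((hasDerivAt_id (0:ℝ)).smul_const (Pi.single d 1 : Fin n → ℝ)).const_add x)
    have hgi : ∀ (k' l : Fin n),
        HasDerivAt (fun s : ℝ => ginv (t, x + s • (Pi.single d 1 : Fin n → ℝ)) k' l)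
          (dxB (fun z => ginv z k' l) d (t, x)) 0 := by
      intro k' l
      have h0 : HasFDerivAt (fun z : Base m n => ginv z k' l)
          (fderiv ℝ (fun z : Base m n => ginv z k' l) (t, x))
          ((fun s : ℝ => ((t, x + s • (Pi.single d 1 : Fin n → ℝ)) : Base m n)) 0) := by
        simpa using ((gid k' l) ((t, x) : Base m n)).hasFDerivAt
      exact h0.comp_hasDerivAt 0 hcurve
    have hUc : HasDerivAt (fun s : ℝ => U (t, x + s • (Pi.single d 1 : Fin n → ℝ)) k b)
        (dxB (fun z => U z k b) d (t, x)) 0 := by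
      have h0 : HasFDerivAt (fun z : Base m n => U z k b)
          (fderiv ℝ (fun z : Base m n => U z k b) (t, x))
          ((fun s : ℝ => ((t, x + s • (Pi.single d 1 : Fin n → ℝ)) : Base m n)) 0) := by
        simpa using ((Ud k b) ((t, x) : Base m n)).hasFDerivAt
      exact h0.comp_hasDerivAt 0 hcurve
    have hD : HasDerivAt (fun s : ℝ =>
        (∑ c, ∑ l, 2 * h t b c * ginv (t, x + s • (Pi.single d 1 : Fin n → ℝ)) k l * p l c)
          + U (t, x + s • (Pi.single d 1 : Fin n → ℝ)) k b)
        ((∑ c, ∑ l, 2 * h t b c * dxB (fun z => ginv z k l) d (t, x) * p l c)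
          + dxB (fun z => U z k b) d (t, x)) 0 := by
      apply HasDerivAt.add
      · exact HasDerivAt.fun_sum fun c _ => HasDerivAt.fun_sum fun l _ =>
          (((hgi k l).const_mul (2 * h t b c)).mul_const (p l c))
      · exact hUc
    exact hD.deriv
  -- differentiated inverse identity
  have hdg : ∀ (d : Fin n) (i' l : Fin n),
      (∑ k, g (t, x) i' k * dxB (fun z => ginv z k l) d (t, x))
        = -∑ k, ginv (t, x) l k * dxB (fun z => g z k i') d (t, x) := by
    intro d i' l
    have hconst : dxB (fun z : Base m n => ∑ k, ginv z l k * g z k i') d (t, x) = 0 := by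
      have heq : (fun z : Base m n => ∑ k, ginv z l k * g z k i')
          = fun _ : Base m n => if l = i' then (1:ℝ) else 0 := by
        funext z; exact hg' z l i'
      rw [heq, dxB_const]
    have hsum := dxB_sum (s := Finset.univ)
      (f := fun (k : Fin n) (z : Base m n) => ginv z l k * g z k i') (z := ((t, x) : Base m n))
      (fun k _ => by fun_prop) d
    have hconst0 : (∑ k, dxB (fun z : Base m n => ginv z l k * g z k i') d (t, x)) = 0 :=
      hsum.symm.trans hconst
    have hsplit : ∀ k : Fin n, dxB (fun z : Base m n => ginv z l k * g z k i') d (t, x)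
        = ginv (t, x) l k * dxB (fun z => g z k i') d (t, x)
          + g (t, x) k i' * dxB (fun z => ginv z l k) d (t, x) := by
      intro k; exact dxB_mul (by fun_prop) (by fun_prop) d
    have hconst1 : (∑ k, (ginv (t, x) l k * dxB (fun z => g z k i') d (t, x)
          + g (t, x) k i' * dxB (fun z => ginv z l k) d (t, x))) = 0 :=
      (Finset.sum_congr rfl fun k _ => (hsplit k).symm).trans hconst0
    rw [Finset.sum_add_distrib] at hconst1
    have h2 : (∑ k, g (t, x) i' k * dxB (fun z => ginv z k l) d (t, x))
        = ∑ k, g (t, x) k i' * dxB (fun z => ginv z l k) d (t, x) := by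
      refine Finset.sum_congr rfl fun k _ => ?_
      rw [gsymm (t, x) i' k]
      have heq2 : (fun z : Base m n => ginv z k l) = fun z : Base m n => ginv z l k := by
        funext z; exact ginvsymm z k l
      rw [heq2]
    rw [h2]
    linarith [hconst1]
  -- rewrite the goal
  simp only [hdxdp]
  simp only [hdpT, hdpg, zero_mul, Finset.sum_const_zero, sub_zero]
  -- pure algebra from here on
  have mini : ∀ (D : Fin n → ℝ) (E : Fin n → Fin n → ℝ) (V : Fin n → ℝ) (b : Fin m),
      (∑ k, D k * ((∑ c, ∑ l, 2 * h t b c * E k l * p l c) + V k))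
        = (∑ c, 2 * h t b c * (∑ k, ∑ l, D k * E k l * p l c)) + ∑ k, D k * V k := by
    intro D E V b
    have h1 : ∀ k : Fin n, D k * ((∑ c, ∑ l, 2 * h t b c * E k l * p l c) + V k)
        = (∑ c, ∑ l, D k * (2 * h t b c * E k l * p l c)) + D k * V k := by
      intro k
      rw [mul_add, Finset.mul_sum]
      congr 1
      exact Finset.sum_congr rfl fun c _ => Finset.mul_sum _ _ _
    rw [Finset.sum_congr rfl fun k _ => h1 k, Finset.sum_add_distrib]
    congr 1
    rw [Finset.sum_comm]
    refine Finset.sum_congr rfl fun c _ => ?_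
    rw [Finset.mul_sum]
    refine Finset.sum_congr rfl fun k _ => ?_
    rw [Finset.mul_sum]
    refine Finset.sum_congr rfl fun l _ => ?_
    ring
  have merge : ∀ (F1 F2 F3 : Fin n → Fin n → ℝ) (b : Fin m),
      ((∑ c, 2 * h t b c * (∑ k, ∑ l, F1 k l * p l c))
        + (∑ c, 2 * h t b c * (∑ k, ∑ l, F2 k l * p l c))
        + (∑ c, 2 * h t b c * (∑ k, ∑ l, F3 k l * p l c)))
        = ∑ c, 2 * h t b c * (∑ k, ∑ l, (F1 k l + F2 k l + F3 k l) * p l c) := by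
    intro F1 F2 F3 b
    rw [← Finset.sum_add_distrib, ← Finset.sum_add_distrib]
    refine Finset.sum_congr rfl fun c _ => ?_
    rw [← mul_add, ← mul_add]
    congr 1
    rw [← Finset.sum_add_distrib, ← Finset.sum_add_distrib]
    refine Finset.sum_congr rfl fun k _ => ?_
    rw [← Finset.sum_add_distrib, ← Finset.sum_add_distrib]
    refine Finset.sum_congr rfl fun l _ => ?_
    ring
  have claim : ∀ b : Fin m,
      ((∑ k, dxB (fun z => g z i j) k (t, x) * ((∑ c, ∑ l, 2 * h t b c * ginv (t, x) k l * p l c) + U (t, x) k b))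
        + (∑ k, g (t, x) i k * ((∑ c, ∑ l, 2 * h t b c * dxB (fun z => ginv z k l) j (t, x) * p l c) + dxB (fun z => U z k b) j (t, x)))
        + (∑ k, g (t, x) j k * ((∑ c, ∑ l, 2 * h t b c * dxB (fun z => ginv z k l) i (t, x) * p l c) + dxB (fun z => U z k b) i (t, x))))
      = (∑ c, 2 * h t b c * (∑ k, ∑ l, (dxB (fun z => g z i j) k (t, x) * ginv (t, x) k l + g (t, x) i k * dxB (fun z => ginv z k l) j (t, x) + g (t, x) j k * dxB (fun z => ginv z k l) i (t, x)) * p l c))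
        + ((∑ k, dxB (fun z => g z i j) k (t, x) * U (t, x) k b) + (∑ k, g (t, x) i k * dxB (fun z => U z k b) j (t, x))
            + (∑ k, g (t, x) j k * dxB (fun z => U z k b) i (t, x))) := by
    intro b
    rw [mini (fun k => dxB (fun z => g z i j) k (t, x)) (fun k l => ginv (t, x) k l) (fun k => U (t, x) k b) b,
        mini (fun k => g (t, x) i k) (fun k l => dxB (fun z => ginv z k l) j (t, x)) (fun k => dxB (fun z => U z k b) j (t, x)) b,
        mini (fun k => g (t, x) j k) (fun k l => dxB (fun z => ginv z k l) i (t, x)) (fun k => dxB (fun z => U z k b) i (t, x)) b,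
        ← merge (fun k l => dxB (fun z => g z i j) k (t, x) * ginv (t, x) k l) (fun k l => g (t, x) i k * dxB (fun z => ginv z k l) j (t, x))
          (fun k l => g (t, x) j k * dxB (fun z => ginv z k l) i (t, x)) b]
    ring
  have contr : ∀ (W : Fin m → ℝ),
      (∑ b, hinv t a b / 4 * (∑ c, 2 * h t b c * W c)) = W a / 2 := by
    intro W
    have s1 : ∀ b : Fin m, hinv t a b / 4 * (∑ c, 2 * h t b c * W c)
        = ∑ c, hinv t a b * h t b c * (W c / 2) := by
      intro b
      rw [Finset.mul_sum]
      refine Finset.sum_congr rfl fun c _ => ?_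
      ring
    rw [Finset.sum_congr rfl fun b _ => s1 b, Finset.sum_comm]
    have s2 : ∀ c : Fin m, (∑ b, hinv t a b * h t b c * (W c / 2))
        = (if a = c then (1:ℝ) else 0) * (W c / 2) := by
      intro c
      rw [← Finset.sum_mul, hh']
    rw [Finset.sum_congr rfl fun c _ => s2 c]
    simp
  have coeff : ∀ L : Fin n, (∑ k, (dxB (fun z => g z i j) k (t, x) * ginv (t, x) k L + g (t, x) i k * dxB (fun z => ginv z k L) j (t, x) + g (t, x) j k * dxB (fun z => ginv z k L) i (t, x))) / 2
      = -∑ l, ginv (t, x) L l / 2 * (dxB (fun z => g z l i) j (t, x) + dxB (fun z => g z l j) i (t, x)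
          - dxB (fun z => g z i j) l (t, x)) := by
    intro L
    have e2 : (∑ k, dxB (fun z => g z i j) k (t, x) * ginv (t, x) k L) = ∑ k, ginv (t, x) L k * dxB (fun z => g z i j) k (t, x) :=
      Finset.sum_congr rfl fun k _ => by rw [ginvsymm (t, x) k L]; ring
    have e1 : (∑ k, (dxB (fun z => g z i j) k (t, x) * ginv (t, x) k L + g (t, x) i k * dxB (fun z => ginv z k L) j (t, x) + g (t, x) j k * dxB (fun z => ginv z k L) i (t, x)))
        = ∑ k, (ginv (t, x) L k * dxB (fun z => g z i j) k (t, x) + -(ginv (t, x) L k * dxB (fun z => g z k i) j (t, x))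
            + -(ginv (t, x) L k * dxB (fun z => g z k j) i (t, x))) := by
      calc (∑ k, (dxB (fun z => g z i j) k (t, x) * ginv (t, x) k L + g (t, x) i k * dxB (fun z => ginv z k L) j (t, x) + g (t, x) j k * dxB (fun z => ginv z k L) i (t, x)))
          = (∑ k, dxB (fun z => g z i j) k (t, x) * ginv (t, x) k L) + (∑ k, g (t, x) i k * dxB (fun z => ginv z k L) j (t, x))
            + (∑ k, g (t, x) j k * dxB (fun z => ginv z k L) i (t, x)) := by
            rw [Finset.sum_add_distrib, Finset.sum_add_distrib]
        _ = (∑ k, ginv (t, x) L k * dxB (fun z => g z i j) k (t, x)) + (-∑ k, ginv (t, x) L k * dxB (fun z => g z k i) j (t, x))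
            + (-∑ k, ginv (t, x) L k * dxB (fun z => g z k j) i (t, x)) := by
            rw [hdg j i L, hdg i j L, e2]
        _ = _ := by
            rw [Finset.sum_add_distrib, Finset.sum_add_distrib, Finset.sum_neg_distrib,
              Finset.sum_neg_distrib]
    rw [e1, Finset.sum_div, ← Finset.sum_neg_distrib]
    refine Finset.sum_congr rfl fun k _ => ?_
    ring
  have hWa : (∑ k, ∑ l, (dxB (fun z => g z i j) k (t, x) * ginv (t, x) k l + g (t, x) i k * dxB (fun z => ginv z k l) j (t, x) + g (t, x) j k * dxB (fun z => ginv z k l) i (t, x)) * p l a) / 2 = -(∑ k, (∑ l, ginv (t, x) k l / 2 * (dxB (fun z => g z l i) j (t, x) + dxB (fun z => g z l j) i (t, x) - dxB (fun z => g z i j) l (t, x))) * p k a) := by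
    rw [Finset.sum_comm, Finset.sum_div, ← Finset.sum_neg_distrib]
    refine Finset.sum_congr rfl fun L _ => ?_
    have hs : (∑ k, (dxB (fun z => g z i j) k (t, x) * ginv (t, x) k L + g (t, x) i k * dxB (fun z => ginv z k L) j (t, x) + g (t, x) j k * dxB (fun z => ginv z k L) i (t, x)) * p L a) = (∑ k, (dxB (fun z => g z i j) k (t, x) * ginv (t, x) k L + g (t, x) i k * dxB (fun z => ginv z k L) j (t, x) + g (t, x) j k * dxB (fun z => ginv z k L) i (t, x))) * p L a := by
      rw [Finset.sum_mul]
    rw [hs]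
    linear_combination (p L a) * coeff L
  have hP : (∑ b, hinv t a b / 4 * (∑ c, 2 * h t b c * (∑ k, ∑ l, (dxB (fun z => g z i j) k (t, x) * ginv (t, x) k l + g (t, x) i k * dxB (fun z => ginv z k l) j (t, x) + g (t, x) j k * dxB (fun z => ginv z k l) i (t, x)) * p l c))) = -(∑ k, (∑ l, ginv (t, x) k l / 2 * (dxB (fun z => g z l i) j (t, x) + dxB (fun z => g z l j) i (t, x) - dxB (fun z => g z i j) l (t, x))) * p k a) :=
    (contr _).trans hWa
  simp only [claim]
  simp only [mul_add, Finset.sum_add_distrib]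
  linear_combination hP
end
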